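/- Let X_1,…,X_n and Y_1,…,Y_n be real-valued random variables on a common probability space and suppose all the mutual informations below are finite. Define mutual information of two random vectors U, V as I(U;V) = D_KL( law(U,V) ‖ law(U) ⊗ law(V) ) and the directed information as I(X^n → Y^n) = Σ_{i=1}^{n} [ I(X^i ; Y^i) − I(X^i ; Y^{i-1}) ] (with I(X^1; Y^0) = 0), where X^i = (X_1,…,X_i), Y^i = (Y_1,…,Y_i). If f_1,…,f_n and g_1,…,g_n are measurable embeddings of ℝ into ℝ (for instance strictly increasing continuous functions), and X'_i = f_i(X_i), Y'_i = g_i(Y_i), then I(X'^n → Y'^n) = I(X^n → Y^n). In other words, the directed information between the two time series depends only on the copula of the joint distribution of (X^n, Y^n) and not on its marginals. -/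

import Mathlib

open MeasureTheory
open scoped ENNReal

/-- Kullback–Leibler divergence `∫ log (dμ/dν) dμ` for `μ ≪ ν` (with the integrand
`μ`-integrable), and `+∞` otherwise. -/
noncomputable def klDiv {α : Type*} [MeasurableSpace α] (μ ν : Measure α) : ℝ≥0∞ :=
  open scoped Classical in
  if μ ≪ ν ∧ Integrable (fun x => Real.log (μ.rnDeriv ν x).toReal) μ
  then ENNReal.ofReal (∫ x, Real.log (μ.rnDeriv ν x).toReal ∂μ)
  else ⊤

/-- Mutual information of two random vectors,
`I(U;V) = D_KL(law(U,V) ‖ law(U) ⊗ law(V))`. -/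
noncomputable def mutualInfo {Ω α β : Type*} [MeasurableSpace Ω] [MeasurableSpace α]
    [MeasurableSpace β] (P : Measure Ω) (U : Ω → α) (V : Ω → β) : ℝ≥0∞ :=
  klDiv (P.map (fun ω => (U ω, V ω))) ((P.map U).prod (P.map V))

/-- The prefix `X^i = (X_1, …, X_i)` of length `i.val + 1` (including index `i`) of the real
time series `X_1, …, X_n`, where `i : Fin n` represents the paper's index `i = i.val + 1`. -/
def prefIncl {Ω : Type*} {n : ℕ} (X : Fin n → Ω → ℝ) (i : Fin n) : Ω → Fin (i.val + 1) → ℝ :=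
  fun ω j => X (j.castLE i.isLt) ω

/-- The prefix `X^{i-1} = (X_1, …, X_{i-1})` of length `i.val` of the real time series
`X_1, …, X_n`, where `i : Fin n` represents the paper's index `i = i.val + 1`. -/
def prefExcl {Ω : Type*} {n : ℕ} (X : Fin n → Ω → ℝ) (i : Fin n) : Ω → Fin i.val → ℝ :=
  fun ω j => X (j.castLE i.isLt.le) ω

/-!
A measurable embedding `φ` satisfies `d(μ.map φ)/d(ν.map φ) ∘ φ = dμ/dν` almost everywhere,
so it preserves KL divergence. Mutual information `I(U;V)` is the KL divergence between the law
of `(U, V)` and the product of the marginal laws, and transforming `U` and `V` by embeddings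
`φ`, `ψ` pushes both of these measures forward along the embedding `φ × ψ`. Coordinatewise
embeddings of the time series induce embeddings of every prefix, so each summand of the
directed information is unchanged.
-/

section KLDivergence

variable {α β : Type*} [MeasurableSpace α] [MeasurableSpace β] {φ : α → β}

lemma MeasurableEmbedding.map_absolutelyContinuous_map_iff (hφ : MeasurableEmbedding φ)
    {μ ν : Measure α} : μ.map φ ≪ ν.map φ ↔ μ ≪ ν := by
  refine ⟨fun h s hs => ?_, hφ.absolutelyContinuous_map⟩
  have hνs : ν.map φ (φ '' s) = 0 := by
    rw [hφ.map_apply, hφ.injective.preimage_image, hs]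
  simpa only [hφ.map_apply, hφ.injective.preimage_image] using h hνs

lemma klDiv_map_of_measurableEmbedding (hφ : MeasurableEmbedding φ)
    (μ ν : Measure α) [SigmaFinite μ] [SigmaFinite ν] :
    klDiv (μ.map φ) (ν.map φ) = klDiv μ ν := by
  classical
  by_cases hac : μ ≪ ν
  · have hllr : (fun x => Real.log ((μ.map φ).rnDeriv (ν.map φ) (φ x)).toReal)
        =ᵐ[μ] fun x => Real.log (μ.rnDeriv ν x).toReal := by
      filter_upwards [hac.ae_le (hφ.rnDeriv_map μ ν)] with x hx
      rw [hx]
    have hint : Integrable (fun y => Real.log ((μ.map φ).rnDeriv (ν.map φ) y).toReal)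
        (μ.map φ) ↔ Integrable (fun x => Real.log (μ.rnDeriv ν x).toReal) μ := by
      rw [hφ.integrable_map_iff]
      exact integrable_congr hllr
    rw [klDiv, klDiv, hφ.integral_map, integral_congr_ae hllr]
    exact if_congr (and_congr hφ.map_absolutelyContinuous_map_iff hint) rfl rfl
  · rw [klDiv, klDiv, if_neg fun h => hac (hφ.map_absolutelyContinuous_map_iff.mp h.1),
      if_neg fun h => hac h.1]

end KLDivergence

lemma mutualInfo_comp_measurableEmbedding {Ω α β α' β' : Type*} [MeasurableSpace Ω]
    [MeasurableSpace α] [MeasurableSpace β] [MeasurableSpace α'] [MeasurableSpace β']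
    (P : Measure Ω) [IsFiniteMeasure P]
    {U : Ω → α} {V : Ω → β} (hU : Measurable U) (hV : Measurable V)
    {φ : α → α'} {ψ : β → β'} (hφ : MeasurableEmbedding φ) (hψ : MeasurableEmbedding ψ) :
    mutualInfo P (fun ω => φ (U ω)) (fun ω => ψ (V ω)) = mutualInfo P U V := by
  have hjoint : P.map (fun ω => (φ (U ω), ψ (V ω)))
      = (P.map fun ω => (U ω, V ω)).map (Prod.map φ ψ) := by
    rw [Measure.map_map (hφ.prodMap hψ).measurable (hU.prodMk hV)]
    rfl
  have hmarginals : (P.map fun ω => φ (U ω)).prod (P.map fun ω => ψ (V ω))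
      = ((P.map U).prod (P.map V)).map (Prod.map φ ψ) := by
    rw [← Measure.map_prod_map _ _ hφ.measurable hψ.measurable,
      Measure.map_map hφ.measurable hU, Measure.map_map hψ.measurable hV]
    rfl
  rw [mutualInfo, mutualInfo, hjoint, hmarginals,
    klDiv_map_of_measurableEmbedding (hφ.prodMap hψ)]

lemma MeasurableEmbedding.piMap {ι : Type*} [Countable ι] {α β : ι → Type*}
    [∀ i, MeasurableSpace (α i)] [∀ i, StandardBorelSpace (α i)]
    [∀ i, MeasurableSpace (β i)] [∀ i, StandardBorelSpace (β i)]
    {φ : ∀ i, α i → β i} (hφ : ∀ i, MeasurableEmbedding (φ i)) :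
    MeasurableEmbedding (Pi.map φ) :=
  Measurable.measurableEmbedding
    (measurable_pi_lambda _ fun i => (hφ i).measurable.comp (measurable_pi_apply i))
    (Function.Injective.piMap fun i => (hφ i).injective)

section Prefixes

variable {Ω : Type*} {n : ℕ}

lemma prefIncl_comp (X : Fin n → Ω → ℝ) (f : Fin n → ℝ → ℝ) (i : Fin n) :
    prefIncl (fun k ω => f k (X k ω)) i
      = fun ω => Pi.map (fun j : Fin (i.val + 1) => f (j.castLE i.isLt))
          (prefIncl X i ω) :=
  rfl

lemma prefExcl_comp (X : Fin n → Ω → ℝ) (f : Fin n → ℝ → ℝ) (i : Fin n) :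
    prefExcl (fun k ω => f k (X k ω)) i
      = fun ω => Pi.map (fun j : Fin i.val => f (j.castLE i.isLt.le))
          (prefExcl X i ω) :=
  rfl

variable [MeasurableSpace Ω] {X : Fin n → Ω → ℝ}

lemma measurable_prefIncl (hX : ∀ k, Measurable (X k)) (i : Fin n) :
    Measurable (prefIncl X i) :=
  measurable_pi_lambda _ fun _ => hX _

lemma measurable_prefExcl (hX : ∀ k, Measurable (X k)) (i : Fin n) :
    Measurable (prefExcl X i) :=
  measurable_pi_lambda _ fun _ => hX _

end Prefixes

theorem directedInfo_comp_measurableEmbedding_general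
    {Ω : Type*} [MeasurableSpace Ω] (P : Measure Ω) [IsProbabilityMeasure P]
    {n : ℕ} (X Y : Fin n → Ω → ℝ)
    (hX : ∀ i, Measurable (X i)) (hY : ∀ i, Measurable (Y i))
    (f g : Fin n → ℝ → ℝ)
    (hf : ∀ i, MeasurableEmbedding (f i)) (hg : ∀ i, MeasurableEmbedding (g i)) :
    ∑ i : Fin n,
        ((mutualInfo P (prefIncl (fun k ω => f k (X k ω)) i)
            (prefIncl (fun k ω => g k (Y k ω)) i)).toReal
          - (mutualInfo P (prefIncl (fun k ω => f k (X k ω)) i)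
              (prefExcl (fun k ω => g k (Y k ω)) i)).toReal)
      = ∑ i : Fin n,
          ((mutualInfo P (prefIncl X i) (prefIncl Y i)).toReal
            - (mutualInfo P (prefIncl X i) (prefExcl Y i)).toReal) := by
  refine Finset.sum_congr rfl fun i _ => ?_
  have hfi := MeasurableEmbedding.piMap fun j : Fin (i.val + 1) => hf (j.castLE i.isLt)
  rw [prefIncl_comp, prefIncl_comp, prefExcl_comp,
    mutualInfo_comp_measurableEmbedding P (measurable_prefIncl hX i) (measurable_prefIncl hY i)
      hfi (MeasurableEmbedding.piMap fun j => hg _),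
    mutualInfo_comp_measurableEmbedding P (measurable_prefIncl hX i) (measurable_prefExcl hY i)
      hfi (MeasurableEmbedding.piMap fun j => hg _)]

/-- **Copula formulation of causal discovery** (Theorem 1 of the paper): the directed
information `I(X^n → Y^n) = Σᵢ [I(X^i ; Y^i) − I(X^i ; Y^{i-1})]` is invariant under
coordinatewise injective measurable transformations `X'_i = f_i(X_i)`, `Y'_i = g_i(Y_i)` of
the marginals (all mutual informations below being assumed finite); hence it depends only
on the copula of the joint distribution of `(X^n, Y^n)` and not on its marginals. -/
theorem directedInfo_comp_measurableEmbedding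
    {Ω : Type*} [MeasurableSpace Ω] (P : Measure Ω) [IsProbabilityMeasure P]
    {n : ℕ} (X Y : Fin n → Ω → ℝ)
    (hX : ∀ i, Measurable (X i)) (hY : ∀ i, Measurable (Y i))
    (f g : Fin n → ℝ → ℝ)
    (hf : ∀ i, MeasurableEmbedding (f i)) (hg : ∀ i, MeasurableEmbedding (g i))
    (hfin : ∀ i : Fin n,
      mutualInfo P (prefIncl X i) (prefIncl Y i) ≠ ⊤ ∧
      mutualInfo P (prefIncl X i) (prefExcl Y i) ≠ ⊤ ∧
      mutualInfo P (prefIncl (fun k ω => f k (X k ω)) i)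
        (prefIncl (fun k ω => g k (Y k ω)) i) ≠ ⊤ ∧
      mutualInfo P (prefIncl (fun k ω => f k (X k ω)) i)
        (prefExcl (fun k ω => g k (Y k ω)) i) ≠ ⊤) :
    ∑ i : Fin n,
        ((mutualInfo P (prefIncl (fun k ω => f k (X k ω)) i)
            (prefIncl (fun k ω => g k (Y k ω)) i)).toReal
          - (mutualInfo P (prefIncl (fun k ω => f k (X k ω)) i)
              (prefExcl (fun k ω => g k (Y k ω)) i)).toReal)
      = ∑ i : Fin n,
          ((mutualInfo P (prefIncl X i) (prefIncl Y i)).toReal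
            - (mutualInfo P (prefIncl X i) (prefExcl Y i)).toReal) :=
  directedInfo_comp_measurableEmbedding_general P X Y hX hY f g hf hg
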